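/- arXiv:math/0512032 — 4 statements merged into one kernel-verified Lean document; each statement's English description precedes it below -/
import Mathlib

section
/- Let L be a crossed $\mathcal{C}$-algebra over a crossed module (C, P, ∂). Then for every c ∈ C and x ∈ L, φ_{∂c}(x) = c̃ · x · c̃⁻¹; i.e., the square formed by tilderisation C → U(L), ∂ : C → P, φ : P → Aut(L), and δ : U(L) → Aut(L) (conjugation by a unit) commutes. -/
/-- A crossed module structure: a group `P` acting on a group `C` (via `ψ : P →* MulAut C`)
together with a homomorphism `δ : C →* P` satisfying equivariance and the Peiffer identity. -/
structure IsCrossedModule {C P : Type*} [Group C] [Group P]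
    (ψ : P →* MulAut C) (δ : C →* P) : Prop where
  equivariance : ∀ (p : P) (c : C), δ (ψ p c) = p * δ c * p⁻¹
  peiffer : ∀ (c c' : C), ψ (δ c) c' = c * c' * c⁻¹

/-- A crossed `P`-algebra over a field `K`: a `P`-graded associative unital `K`-algebra with a
nondegenerate symmetric inner product and a `P`-action, satisfying Turaev's axioms. -/
structure CrossedPAlgebra (K : Type*) [Field K] (P : Type*) [Group P]
    (L : Type*) [Ring L] [Algebra K L] where
  grading : P → Submodule K L
  grading_indep : iSupIndep grading
  grading_supr : (⨆ p, grading p) = ⊤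
  mul_mem : ∀ (g h : P), ∀ a ∈ grading g, ∀ b ∈ grading h, a * b ∈ grading (g * h)
  one_mem : (1 : L) ∈ grading 1
  ρ : L →ₗ[K] L →ₗ[K] K
  ρ_symm : ∀ a b : L, ρ a b = ρ b a
  ρ_graded : ∀ (g h : P), g * h ≠ 1 → ∀ a ∈ grading g, ∀ b ∈ grading h, ρ a b = 0
  ρ_nondeg : ∀ (g : P), ∀ a ∈ grading g, (∀ b ∈ grading g⁻¹, ρ a b = 0) → a = 0
  ρ_mul_assoc : ∀ a b c : L, ρ (a * b) c = ρ a (b * c)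
  φ : P →* (L ≃ₐ[K] L)
  φ_grading : ∀ (g h : P), ∀ a ∈ grading h, φ g a ∈ grading (g * h * g⁻¹)
  φ_ρ : ∀ (g : P) (a b : L), ρ (φ g a) (φ g b) = ρ a b
  φ_fix : ∀ (g : P), ∀ a ∈ grading g, φ g a = a
  φ_comm : ∀ (g h : P), ∀ a ∈ grading g, ∀ b ∈ grading h, (φ h) a * b = b * a

/-- A crossed `𝒞`-algebra over a crossed module `(C, P, δ)` (with action `ψ`): a crossed
`P`-algebra together with distinguished elements `c̃ ∈ L_{δ c}` for `c ∈ C`. -/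
structure CrossedAlgebra (K : Type*) [Field K] {C P : Type*} [Group C] [Group P]
    (ψ : P →* MulAut C) (δ : C →* P) (L : Type*) [Ring L] [Algebra K L]
    extends CrossedPAlgebra K P L where
  tilde : C → L
  tilde_mem : ∀ c : C, tilde c ∈ grading (δ c)
  tilde_one : tilde 1 = 1
  tilde_mul : ∀ c c' : C, tilde (c * c') = tilde c * tilde c'
  φ_tilde : ∀ (h : P) (c : C), φ h (tilde c) = tilde (ψ h c)

/-- in a crossed `𝒞`-algebra `L`, for every `c ∈ C` and `x ∈ L`,
`φ_{δ c}(x) = c̃ · x · c̃⁻¹`, i.e. the square formed by tilderisation, `δ`, `φ` and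
conjugation by units commutes. -/
theorem phi_boundary_eq_conj_tilde {K : Type*} [Field K] {C P : Type*} [Group C] [Group P]
    {ψ : P →* MulAut C} {δ : C →* P} (hcm : IsCrossedModule ψ δ)
    {L : Type*} [Ring L] [Algebra K L] (A : CrossedAlgebra K ψ δ L) :
    ∀ (c : C) (x : L), A.φ (δ c) x = A.tilde c * x * A.tilde c⁻¹ := by
  intro c x
  have hinv : A.tilde c * A.tilde c⁻¹ = 1 := by
    rw [← A.tilde_mul, mul_inv_cancel, A.tilde_one]
  have key : ∀ y : L, A.φ (δ c) y = A.tilde c * y * A.tilde c⁻¹ := by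
    intro y
    have hy : y ∈ (⨆ p, A.grading p) := by rw [A.grading_supr]; trivial
    induction hy using Submodule.iSup_induction' with
    | mem h z hz =>
        have h1 : A.φ (δ c) z * A.tilde c = A.tilde c * z :=
          A.φ_comm h (δ c) z hz (A.tilde c) (A.tilde_mem c)
        calc A.φ (δ c) z = A.φ (δ c) z * (A.tilde c * A.tilde c⁻¹) := by rw [hinv, mul_one]
      _ = (A.φ (δ c) z * A.tilde c) * A.tilde c⁻¹ := by rw [mul_assoc]
      _ = (A.tilde c * z) * A.tilde c⁻¹ := by rw [h1]
    | zero => simp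
    | add a _ b _ ha hb => rw [map_add, ha, hb, mul_add, add_mul]
  exact key x
end

section
/- Let L be a crossed $\mathcal{C}$-algebra over (C, P, ∂). The pair of maps (c ↦ c̃, p ↦ φ_p) constitutes a morphism of crossed modules from (C, P, ∂) to (U(L), Aut(L), δ): both maps are group homomorphisms, the square δ ∘ (~) = φ ∘ ∂ commutes, and (ʰc)~ = φ_h applied to c̃ (equivariance with respect to the actions). -/
namespace CrossedPAlgebra

variable {K : Type*} [Field K] {P : Type*} [Group P] {L : Type*} [Ring L] [Algebra K L]

/-- `φ_comm` gives this for homogeneous `x`, and the homogeneous elements span `L`. -/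
theorem φ_mul_of_mem (A : CrossedPAlgebra K P L) {g : P} {a : L} (ha : a ∈ A.grading g)
    (x : L) : A.φ g x * a = a * x := by
  have hx : x ∈ ⨆ p, A.grading p := by rw [A.grading_supr]; trivial
  induction hx using Submodule.iSup_induction' with
  | mem p y hy => exact A.φ_comm p g y hy a ha
  | zero => simp
  | add y z _ _ hy hz => rw [map_add, add_mul, hy, hz, mul_add]

theorem φ_eq_conj_of_mem (A : CrossedPAlgebra K P L) {g : P} {u : Lˣ}
    (hu : (u : L) ∈ A.grading g) (x : L) : A.φ g x = u * x * (u⁻¹ : Lˣ) := by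
  rw [← A.φ_mul_of_mem hu x, Units.mul_inv_cancel_right]

end CrossedPAlgebra

namespace CrossedAlgebra

variable {K : Type*} [Field K] {C P : Type*} [Group C] [Group P] {ψ : P →* MulAut C}
  {δ : C →* P} {L : Type*} [Ring L] [Algebra K L]

def tildeHom (A : CrossedAlgebra K ψ δ L) : C →* L where
  toFun := A.tilde
  map_one' := A.tilde_one
  map_mul' := A.tilde_mul

end CrossedAlgebra

theorem tilde_phi_crossed_module_morphism_general {K : Type*} [Field K] {C P : Type*} [Group C]
    [Group P] {ψ : P →* MulAut C} {δ : C →* P}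
    {L : Type*} [Ring L] [Algebra K L] (A : CrossedAlgebra K ψ δ L) :
    ∃ T : C →* Lˣ,
      (∀ c : C, (T c : L) = A.tilde c) ∧
      (∀ (c : C) (x : L), A.φ (δ c) x = (T c : L) * x * ((T c)⁻¹ : Lˣ)) ∧
      (∀ (h : P) (c : C), (T (ψ h c) : L) = A.φ h (T c : L)) :=
  ⟨A.tildeHom.toHomUnits, fun _ => rfl,
    fun c => A.φ_eq_conj_of_mem (A.tilde_mem c),
    fun h c => (A.φ_tilde h c).symm⟩

/-- in a crossed `𝒞`-algebra `L`, the pair `(c ↦ c̃, p ↦ φ_p)` is a morphism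
of crossed modules from `(C, P, δ)` to `(U(L), Aut(L), conjugation)`: tilderisation lifts to a
group homomorphism `T : C →* Lˣ`, the square commutes (`φ_{δ c}` is conjugation by `c̃`), and
`T` is equivariant: `(ʰc)~ = φ_h(c̃)`. -/
theorem tilde_phi_crossed_module_morphism {K : Type*} [Field K] {C P : Type*} [Group C]
    [Group P] {ψ : P →* MulAut C} {δ : C →* P} (hcm : IsCrossedModule ψ δ)
    {L : Type*} [Ring L] [Algebra K L] (A : CrossedAlgebra K ψ δ L) :
    ∃ T : C →* Lˣ,
      (∀ c : C, (T c : L) = A.tilde c) ∧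
      (∀ (c : C) (x : L), A.φ (δ c) x = (T c : L) * x * ((T c)⁻¹ : Lˣ)) ∧
      (∀ (h : P) (c : C), (T (ψ h c) : L) = A.φ h (T c : L)) :=
  tilde_phi_crossed_module_morphism_general A
end

section
/- In a crossed $\mathcal{C}$-algebra L, for c ∈ C, g ∈ P, x ∈ L_g, y ∈ L_{(∂c·g)⁻¹}, one has ρ(c̃·x, y) = ρ(x, ((g⁻¹)c)~ · y), where (g⁻¹)c denotes the action of g⁻¹ on c. -/
/-- in a crossed `𝒞`-algebra `L`, for `c ∈ C`, `g ∈ P`, `x ∈ L_g` and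
`y ∈ L_{(δc·g)⁻¹}`, one has `ρ(c̃·x, y) = ρ(x, ((g⁻¹)c)~ · y)`. -/
theorem rho_tilde_adjunction {K : Type*} [Field K] {C P : Type*} [Group C] [Group P]
    {ψ : P →* MulAut C} {δ : C →* P} (hcm : IsCrossedModule ψ δ)
    {L : Type*} [Ring L] [Algebra K L] (A : CrossedAlgebra K ψ δ L) :
    ∀ (c : C) (g : P), ∀ x ∈ A.grading g, ∀ y ∈ A.grading (δ c * g)⁻¹,
      A.ρ (A.tilde c * x) y = A.ρ x (A.tilde (ψ g⁻¹ c) * y) := by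
  intro c g x hx y hy
  have key : A.tilde c * x = x * A.tilde (ψ g⁻¹ c) := by
    have h1 := A.φ_comm (δ (ψ g⁻¹ c)) g (A.tilde (ψ g⁻¹ c)) (A.tilde_mem _) x hx
    have h2 : A.φ g (A.tilde (ψ g⁻¹ c)) = A.tilde c := by
      rw [A.φ_tilde]
      congr 1
      have : ψ g (ψ g⁻¹ c) = (ψ g * ψ g⁻¹) c := rfl
      rw [this, ← map_mul, mul_inv_cancel, map_one]
      rfl
    rw [h2] at h1
    exact h1
  rw [key, A.ρ_mul_assoc]
end

section
/- Let (C, P, ∂) be a crossed module over a field K with ker ∂ finite (or C finite). The group algebra K[C], graded by setting L_p = span{e_c : ∂c = p}, with inner product ρ(e_c, e_{c'}) = 1 if c' = c⁻¹ and 0 otherwise, action φ_g(e_c) = e_{ᵍc}, and c̃ = e_c, is a crossed C-algebra; in particular the crossed P-algebra axioms φ_g(L_h) ⊆ L_{ghg⁻¹}, φ_g|_{L_g} = id, and φ_h(a)b = ba all hold. -/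
open scoped Classical

/-!
The grading of `K[C]` by `δ` is the fibre decomposition of the basis `C`, and the bilinear form
is `ρ(a, b) = (a * b)(1)`, so grading, symmetry and nondegeneracy are statements about supports.
The crossed-module axioms enter only through the action: equivariance makes `φ_g` move `L_h`
to `L_{ghg⁻¹}`, and the Peiffer identity says that `φ_{δ c}` is conjugation by `e_c`, which
gives both `φ_g|_{L_g} = id` and `φ_h(a) b = b a` for `b ∈ L_h`.
-/

namespace MonoidAlgebra

variable {k G H ι : Type*}

section Grading

variable [Semiring k]

theorem single_mem_supported {s : Set G} {c : G} (r : k) (hc : c ∈ s) :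
    single c r ∈ supported k k s :=
  mem_supported'.2 fun _ hd => by
    rw [coeff_single, Finsupp.single_eq_of_ne (by rintro rfl; exact hd hc)]

theorem eqOn_supported {M : Type*} [AddCommMonoid M] [Module k M] {s : Set G}
    {f g : k[G] →ₗ[k] M} (h : ∀ c ∈ s, f (single c 1) = g (single c 1)) :
    Set.EqOn f g (supported k k s) := by
  rw [supported_eq_span_single]
  refine LinearMap.eqOn_span' ?_
  rintro _ ⟨c, hc, rfl⟩
  exact h c hc

theorem iSupIndep_supported_fiber (f : G → ι) :
    iSupIndep fun i => supported k k (f ⁻¹' {i}) := by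
  intro i
  have hdisj : Disjoint (supported k k (f ⁻¹' {i})) (supported k k (f ⁻¹' {i})ᶜ) := by
    rw [Submodule.disjoint_def]
    intro a hi hc
    ext c
    by_cases hfc : f c = i
    · exact mem_supported'.1 hc c (by simpa using hfc)
    · exact mem_supported'.1 hi c hfc
  refine hdisj.mono_right (iSup₂_le fun j hj => supported_mono ?_)
  rintro c rfl
  exact hj

theorem iSup_supported_fiber (f : G → ι) : ⨆ i, supported k k (f ⁻¹' {i}) = ⊤ := by
  refine Submodule.eq_top_iff'.2 fun a => ?_
  induction a using induction_linear with
  | zero => exact zero_mem _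
  | add a b ha hb => exact add_mem ha hb
  | single c r => exact Submodule.mem_iSup_of_mem (f c) (single_mem_supported r rfl)

variable [Monoid G] {P : Type*} [Monoid P] (f : G →* P)

theorem one_mem_supported_fiber : (1 : k[G]) ∈ supported k k (f ⁻¹' {1}) :=
  single_mem_supported 1 (map_one f)

theorem mul_mem_supported_fiber {g h : P} {a b : k[G]} (ha : a ∈ supported k k (f ⁻¹' {g}))
    (hb : b ∈ supported k k (f ⁻¹' {h})) : a * b ∈ supported k k (f ⁻¹' {g * h}) := by
  classical
  intro c hc
  obtain ⟨x, hx, y, hy, rfl⟩ := Finset.mem_mul.1 (support_coeff_mul_subset a b hc)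
  have hxg : f x = g := ha hx
  have hyh : f y = h := hb hy
  show f (x * y) = g * h
  rw [map_mul, hxg, hyh]

end Grading

section TraceForm

variable (k G) [CommSemiring k]

noncomputable def traceForm [Monoid G] : k[G] →ₗ[k] k[G] →ₗ[k] k :=
  (LinearMap.mul k k[G]).compr₂ (Finsupp.lapply 1 ∘ₗ (coeffLinearEquiv k).toLinearMap)

variable {k G}

@[simp]
theorem traceForm_apply [Monoid G] (a b : k[G]) : traceForm k G a b = (a * b).coeff 1 :=
  rfl

theorem traceForm_domCongr [Monoid G] [Monoid H] (e : G ≃* H) (a b : k[G]) :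
    traceForm k H (domCongr k k e a) (domCongr k k e b) = traceForm k G a b := by
  simp [← map_mul, coeff_domCongr]

variable [Group G]

theorem traceForm_comm (a b : k[G]) : traceForm k G a b = traceForm k G b a := by
  rw [traceForm_apply, traceForm_apply, coeff_mul_apply_left, coeff_mul_apply_right]
  simp [mul_comm]

theorem traceForm_single_inv (a : k[G]) (c : G) : traceForm k G a (single c⁻¹ 1) = a.coeff c := by
  simp

theorem traceForm_single_single (c c' : G) :
    traceForm k G (single c 1) (single c' 1) = if c' = c⁻¹ then 1 else 0 := by
  rw [← inv_inv c', traceForm_single_inv, coeff_single, Finsupp.single_apply, inv_inj]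
  exact if_congr eq_comm rfl rfl

end TraceForm

theorem domCongr_mem_supported [CommSemiring k] [Monoid G] [Monoid H] (e : G ≃* H) {s : Set G}
    {a : k[G]} (ha : a ∈ supported k k s) : domCongr k k e a ∈ supported k k (e '' s) := by
  rw [mem_supported, domCongr_support, Finset.coe_map]
  exact Set.image_mono (mem_supported.1 ha)

theorem domCongr_conj [CommSemiring k] [Group G] (d : G) (a : k[G]) :
    domCongr k k (MulAut.conj d) a = single d 1 * a * single d⁻¹ 1 := by
  induction a using induction_linear with
  | zero => simp
  | add a b ha hb => simp [ha, hb, mul_add, add_mul]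
  | single c r => simp [single_mul_single]

end MonoidAlgebra

namespace IsCrossedModule

open MonoidAlgebra

variable {C P : Type*} [Group C] [Group P] {ψ : P →* MulAut C} {δ : C →* P}

theorem ψ_δ_eq_conj (hcm : IsCrossedModule ψ δ) (c : C) : ψ (δ c) = MulAut.conj c :=
  MulEquiv.ext (hcm.peiffer c)

theorem image_fiber_subset (hcm : IsCrossedModule ψ δ) (g h : P) :
    ψ g '' (δ ⁻¹' {h}) ⊆ δ ⁻¹' {g * h * g⁻¹} := by
  rintro _ ⟨c, rfl, rfl⟩
  exact hcm.equivariance g c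

theorem domCongr_ψ_δ {k : Type*} [CommSemiring k] (hcm : IsCrossedModule ψ δ) (c : C)
    (a : k[C]) : domCongr k k (ψ (δ c)) a = single c 1 * a * single c⁻¹ 1 := by
  rw [hcm.ψ_δ_eq_conj, domCongr_conj]

noncomputable def groupAlgebra (K : Type*) [Field K] (hcm : IsCrossedModule ψ δ) :
    CrossedAlgebra K ψ δ K[C] where
  grading p := supported K K (δ ⁻¹' {p})
  grading_indep := iSupIndep_supported_fiber δ
  grading_supr := iSup_supported_fiber δ
  mul_mem _ _ _ ha _ hb := mul_mem_supported_fiber δ ha hb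
  one_mem := one_mem_supported_fiber δ
  ρ := traceForm K C
  ρ_symm := traceForm_comm
  ρ_graded g h hgh a ha b hb := mem_supported'.1 (mul_mem_supported_fiber δ ha hb) 1 <| by
    simpa [eq_comm] using hgh
  ρ_nondeg g a ha h0 := by
    ext c
    by_cases hc : δ c = g
    · rw [← traceForm_single_inv]
      exact h0 _ (single_mem_supported 1 (by simp [hc]))
    · exact mem_supported'.1 ha c hc
  ρ_mul_assoc a b c := by simp [mul_assoc]
  φ := domCongrAut.comp ψ
  φ_grading g h _ ha :=
    supported_mono (hcm.image_fiber_subset g h) (domCongr_mem_supported (ψ g) ha)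
  φ_ρ g := traceForm_domCongr (ψ g)
  φ_fix g _ ha :=
    eqOn_supported (f := (domCongr K K (ψ g)).toLinearMap) (g := .id)
      (by rintro c rfl; simp [hcm.peiffer]) ha
  φ_comm _ h a _ _ hb :=
    eqOn_supported (f := .mulLeft K (domCongr K K (ψ h) a)) (g := .mulRight K a)
      (by rintro d rfl; simp [hcm.domCongr_ψ_δ, mul_assoc, single_mul_single, ← one_def]) hb
  tilde c := single c 1
  tilde_mem c := single_mem_supported 1 rfl
  tilde_one := one_def.symm
  tilde_mul c c' := by rw [single_mul_single, one_mul]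
  φ_tilde h c := domCongr_single (ψ h) c 1

end IsCrossedModule

theorem groupAlgebra_top_crossedAlgebra_general {K : Type*} [Field K] {C P : Type*} [Group C] [Group P]
    {ψ : P →* MulAut C} {δ : C →* P} (hcm : IsCrossedModule ψ δ) :
    ∃ A : CrossedAlgebra K ψ δ (MonoidAlgebra K C),
      (∀ p : P, A.grading p =
        Submodule.span K ((fun c => MonoidAlgebra.single c (1 : K)) '' {c : C | δ c = p})) ∧
      (∀ c c' : C, A.ρ (MonoidAlgebra.single c (1 : K)) (MonoidAlgebra.single c' (1 : K)) =
        if c' = c⁻¹ then 1 else 0) ∧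
      (∀ (g : P) (c : C), A.φ g (MonoidAlgebra.single c (1 : K)) =
        MonoidAlgebra.single (ψ g c) (1 : K)) ∧
      (∀ c : C, A.tilde c = MonoidAlgebra.single c (1 : K)) :=
  ⟨hcm.groupAlgebra K, fun _ => MonoidAlgebra.supported_eq_span_single K _,
    MonoidAlgebra.traceForm_single_single, fun g c => MonoidAlgebra.domCongr_single (ψ g) c 1,
    fun _ => rfl⟩

/-- for a crossed module `(C, P, δ)` over a field `K` with `ker δ` finite, the
group algebra `K[C]`, graded by `L_p = span{e_c : δ c = p}`, with inner product
`ρ(e_c, e_{c'}) = [c' = c⁻¹]`, action `φ_g(e_c) = e_{ᵍc}` and `c̃ = e_c`, is a crossed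
`𝒞`-algebra (in particular all the crossed `P`-algebra axioms hold). -/
theorem groupAlgebra_top_crossedAlgebra {K : Type*} [Field K] {C P : Type*} [Group C] [Group P]
    {ψ : P →* MulAut C} {δ : C →* P} (hcm : IsCrossedModule ψ δ) [Finite δ.ker] :
    ∃ A : CrossedAlgebra K ψ δ (MonoidAlgebra K C),
      (∀ p : P, A.grading p =
        Submodule.span K ((fun c => MonoidAlgebra.single c (1 : K)) '' {c : C | δ c = p})) ∧
      (∀ c c' : C, A.ρ (MonoidAlgebra.single c (1 : K)) (MonoidAlgebra.single c' (1 : K)) =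
        if c' = c⁻¹ then 1 else 0) ∧
      (∀ (g : P) (c : C), A.φ g (MonoidAlgebra.single c (1 : K)) =
        MonoidAlgebra.single (ψ g c) (1 : K)) ∧
      (∀ c : C, A.tilde c = MonoidAlgebra.single c (1 : K)) :=
  groupAlgebra_top_crossedAlgebra_general hcm
end
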